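/- arXiv:1502.01073 — 5 statements merged into one kernel-verified Lean document; each statement's English description precedes it below -/
import Mathlib

section
/- For noise covariance Σ_ε with common cross-correlation ρ and variances σ_i², the MAF coefficient vector w = Σ_ε⁻¹b satisfies, up to a positive scalar, w_i = b_i/σ_i² − (ρ/(1+ρ(p−1)))·Σ_{j=1}^p b_j/(σ_i σ_j) for each i. -/
/-!
Write `Σ = D M D` with `D = diag σ` and `M = ρ J + (1 - ρ) I`, where `J` is the all-ones matrix.
Since `J² = p J`, the inverse of `M` stays in the span of `I` and `J`:
`M⁻¹ = (1 - ρ)⁻¹ (I - ρ / (1 + ρ (p - 1)) J)`, valid as soon as `ρ ≠ 1` and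
`1 + ρ (p - 1) ≠ 0`. Hence `Σ⁻¹ b = D⁻¹ M⁻¹ D⁻¹ b`, which is the claimed vector
scaled by `c = (1 - ρ)⁻¹ > 0`.
-/

open Matrix

namespace Matrix

theorem vecMulVec_one_mul_self {n R : Type*} [Fintype n] [CommSemiring R] :
    vecMulVec (1 : n → R) (1 : n → R) * vecMulVec (1 : n → R) (1 : n → R) =
      (Fintype.card n : R) • vecMulVec (1 : n → R) (1 : n → R) := by
  rw [vecMulVec_mul_vecMulVec, one_dotProduct_one, vecMulVec_smul]

variable {n K : Type*} [Fintype n] [DecidableEq n] [Field K]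

theorem inv_smul_vecMulVec_one_add_smul_one {ρ : K} (hρ : 1 - ρ ≠ 0)
    (hs : 1 + ρ * (Fintype.card n - 1) ≠ 0) :
    (ρ • vecMulVec (1 : n → K) (1 : n → K) + (1 - ρ) • 1)⁻¹ =
      (1 - ρ)⁻¹ •
        (1 - (ρ / (1 + ρ * (Fintype.card n - 1))) • vecMulVec (1 : n → K) (1 : n → K)) := by
  set J := vecMulVec (1 : n → K) (1 : n → K)
  set s := 1 + ρ * (Fintype.card n - 1)
  have hJJ : J * J = (Fintype.card n : K) • J := vecMulVec_one_mul_self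
  have hrs : ρ / s * s = ρ := div_mul_cancel₀ ρ hs
  refine inv_eq_right_inv ?_
  calc (ρ • J + (1 - ρ) • 1) * ((1 - ρ)⁻¹ • (1 - (ρ / s) • J))
      = (1 - ρ)⁻¹ • ((1 - ρ) • 1 + (ρ - ρ / s * s) • J) := by
        simp only [Matrix.add_mul, Matrix.mul_sub, Matrix.smul_mul, Matrix.mul_smul,
          Matrix.one_mul, Matrix.mul_one, hJJ]
        module
    _ = 1 := by rw [hrs, sub_self, zero_smul, add_zero, smul_smul, inv_mul_cancel₀ hρ, one_smul]

theorem inv_diagonal_of_ne_zero {v : n → K} (hv : ∀ i, v i ≠ 0) :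
    (diagonal v)⁻¹ = diagonal fun i => (v i)⁻¹ :=
  inv_eq_right_inv <| by
    rw [diagonal_mul_diagonal, ← diagonal_one]
    exact congrArg diagonal (funext fun i => mul_inv_cancel₀ (hv i))

end Matrix

theorem one_add_mul_natCast_sub_one_pos {p : ℕ} {ρ : ℝ} (h1 : ρ < 1)
    (h2 : -1 / ((p : ℝ) - 1) < ρ) : 0 < 1 + ρ * ((p : ℝ) - 1) := by
  rcases Nat.lt_trichotomy p 1 with hp | rfl | hp
  · obtain rfl : p = 0 := by omega
    norm_num at h2
    linarith
  · norm_num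
  · have hp' : (0 : ℝ) < p - 1 := by
      rw [sub_pos]
      exact_mod_cast hp
    have := (div_lt_iff₀ hp').mp h2
    linarith

theorem maf_coefficients_equicorrelated_general {p : ℕ}
    (σ : Fin p → ℝ) (hσ : ∀ i, 0 < σ i)
    (ρ : ℝ) (hρ1 : ρ < 1) (hρ2 : -1 / ((p : ℝ) - 1) < ρ)
    (b : Fin p → ℝ)
    (Sig : Matrix (Fin p) (Fin p) ℝ)
    (hSig : Sig = Matrix.diagonal σ *
        (ρ • Matrix.vecMulVec (fun _ : Fin p => (1 : ℝ)) (fun _ => 1) +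
          (1 - ρ) • (1 : Matrix (Fin p) (Fin p) ℝ)) *
      Matrix.diagonal σ) :
    ∃ c : ℝ, 0 < c ∧ ∀ i,
      (Sig⁻¹ *ᵥ b) i =
        c * (b i / σ i ^ 2 -
          (ρ / (1 + ρ * ((p : ℝ) - 1))) * ∑ j, b j / (σ i * σ j)) := by
  have hs := one_add_mul_natCast_sub_one_pos hρ1 hρ2
  have hM := inv_smul_vecMulVec_one_add_smul_one (n := Fin p) (sub_ne_zero.mpr hρ1.ne')
    (by rw [Fintype.card_fin]; exact hs.ne')
  rw [Fintype.card_fin] at hM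
  have hD := inv_diagonal_of_ne_zero fun i => (hσ i).ne'
  refine ⟨(1 - ρ)⁻¹, inv_pos.mpr (sub_pos.mpr hρ1), fun i => ?_⟩
  have hsum : ∑ j, b j / (σ i * σ j) = (σ i)⁻¹ * ∑ j, (σ j)⁻¹ * b j := by
    rw [Finset.mul_sum]
    exact Finset.sum_congr rfl fun j _ => by field_simp
  rw [hSig, Matrix.mul_inv_rev, Matrix.mul_inv_rev, ← Pi.one_def, hM, hD,
    ← mulVec_mulVec, ← mulVec_mulVec]
  simp only [mulVec_diagonal, smul_mulVec, sub_mulVec, one_mulVec, vecMulVec_mulVec,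
    one_dotProduct, op_smul_eq_smul, Pi.smul_apply, Pi.sub_apply, Pi.one_apply, smul_eq_mul, hsum]
  ring

/-- for equicorrelated noise with variances σᵢ², the MAF
coefficient vector w = Σ_ε⁻¹b satisfies, up to a positive scalar,
wᵢ = bᵢ/σᵢ² − (ρ/(1+ρ(p−1)))·Σⱼ bⱼ/(σᵢσⱼ). -/
theorem maf_coefficients_equicorrelated {p : ℕ} (hp : 0 < p)
    (σ : Fin p → ℝ) (hσ : ∀ i, 0 < σ i)
    (ρ : ℝ) (hρ1 : ρ < 1) (hρ2 : -1 / ((p : ℝ) - 1) < ρ)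
    (b : Fin p → ℝ)
    (Sig : Matrix (Fin p) (Fin p) ℝ)
    (hSig : Sig = Matrix.diagonal σ *
        (ρ • Matrix.vecMulVec (fun _ : Fin p => (1 : ℝ)) (fun _ => 1) +
          (1 - ρ) • (1 : Matrix (Fin p) (Fin p) ℝ)) *
      Matrix.diagonal σ) :
    ∃ c : ℝ, 0 < c ∧ ∀ i,
      (Sig⁻¹ *ᵥ b) i =
        c * (b i / σ i ^ 2 -
          (ρ / (1 + ρ * ((p : ℝ) - 1))) * ∑ j, b j / (σ i * σ j)) :=
  maf_coefficients_equicorrelated_general σ hσ ρ hρ1 hρ2 b Sig hSig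
end

section
/- The function SNR(ν) = b₁²q(1+νγ)² / [(1−ρ)(1+ν²) + ρq(1+ν)²] attains its maximum over ν ∈ ℝ at ν = (γ(1−ρ+ρq) − ρq)/(1−ρ+ρq − γρq), and attains its minimum value 0 at ν = −1/γ. -/
/-!
Write `A = 1 - ρ + ρq` and `B = ρq`. The denominator of the SNR is the quadratic form
`Q(ν) = A(1 + ν²) + 2Bν` of the matrix `[[A, B], [B, A]]` at `(1, ν)`, which is positive definite
since `A - B = 1 - ρ > 0` and `A + B = 1 + (2q - 1)ρ > 0`. The Cauchy–Schwarz inequality for this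
form, written as the identity
`(A² - B²)(1 + γν)² + ((A - γB)ν - (γA - B))² = (A(1 + γ²) - 2γB) Q(ν)`,
bounds `(1 + γν)² / Q(ν)` by `(A(1 + γ²) - 2γB) / (A² - B²)`, with equality exactly where the
square vanishes, at `ν = (γA - B) / (A - γB)`.
-/

section SymmetricQuadraticForm

variable {A B : ℝ}

theorem symQuad_pos (hBA : B < A) (hAB : -A < B) (ν : ℝ) : 0 < A * (1 + ν ^ 2) + 2 * B * ν := by
  have hsplit :
      2 * (A * (1 + ν ^ 2) + 2 * B * ν) = (A - B) * (1 - ν) ^ 2 + (A + B) * (1 + ν) ^ 2 := by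
    ring
  have hminus := mul_nonneg (sub_pos.2 hBA).le (sq_nonneg (1 - ν))
  have hplus := mul_nonneg (neg_lt_iff_pos_add.1 hAB).le (sq_nonneg (1 + ν))
  rcases le_total 0 ν with hν | hν
  · nlinarith [mul_pos (neg_lt_iff_pos_add.1 hAB) (by positivity : (0 : ℝ) < (1 + ν) ^ 2)]
  · nlinarith [mul_pos (sub_pos.2 hBA) (by nlinarith : (0 : ℝ) < (1 - ν) ^ 2)]

theorem det_mul_sq_add_sq_eq (γ ν : ℝ) :
    (A ^ 2 - B ^ 2) * (1 + ν * γ) ^ 2 + ((A - γ * B) * ν - (γ * A - B)) ^ 2 =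
      (A * (1 + γ ^ 2) - 2 * γ * B) * (A * (1 + ν ^ 2) + 2 * B * ν) := by
  ring

theorem sq_div_symQuad_le (hBA : B < A) (hAB : -A < B) (γ ν : ℝ) :
    (1 + ν * γ) ^ 2 / (A * (1 + ν ^ 2) + 2 * B * ν) ≤
      (A * (1 + γ ^ 2) - 2 * γ * B) / (A ^ 2 - B ^ 2) := by
  have hdet : 0 < A ^ 2 - B ^ 2 := by nlinarith
  rw [div_le_div_iff₀ (symQuad_pos hBA hAB ν) hdet, ← det_mul_sq_add_sq_eq]
  nlinarith [sq_nonneg ((A - γ * B) * ν - (γ * A - B))]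

theorem sq_div_symQuad_eq_at_argmax (hBA : B < A) (hAB : -A < B) {γ : ℝ} (hγ : A - γ * B ≠ 0) :
    (1 + (γ * A - B) / (A - γ * B) * γ) ^ 2 /
        (A * (1 + ((γ * A - B) / (A - γ * B)) ^ 2) + 2 * B * ((γ * A - B) / (A - γ * B))) =
      (A * (1 + γ ^ 2) - 2 * γ * B) / (A ^ 2 - B ^ 2) := by
  have hdet : 0 < A ^ 2 - B ^ 2 := by nlinarith
  have hsq := det_mul_sq_add_sq_eq (A := A) (B := B) γ ((γ * A - B) / (A - γ * B))
  rw [mul_div_cancel₀ _ hγ, sub_self, zero_pow two_ne_zero, add_zero] at hsq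
  rw [div_eq_div_iff (symQuad_pos hBA hAB _).ne' hdet.ne', mul_comm, hsq]

end SymmetricQuadraticForm

theorem two_group_snr_optimum_general (q : ℕ) (hq : 1 ≤ q)
    (b1 γ ρ : ℝ) (hγ0 : 0 < γ)
    (hρ1 : ρ < 1) (hρ2 : -1 / (2 * (q : ℝ) - 1) < ρ)
    (hden : 1 - ρ + ρ * q - γ * ρ * q ≠ 0)
    (SNR : ℝ → ℝ)
    (hSNR : ∀ ν, SNR ν = b1 ^ 2 * q * (1 + ν * γ) ^ 2 /
      ((1 - ρ) * (1 + ν ^ 2) + ρ * q * (1 + ν) ^ 2)) :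
    (∀ ν, SNR ν ≤ SNR ((γ * (1 - ρ + ρ * q) - ρ * q) / (1 - ρ + ρ * q - γ * ρ * q))) ∧
    SNR (-1 / γ) = 0 ∧ (∀ ν, 0 ≤ SNR ν) := by
  set A := 1 - ρ + ρ * q with hA
  set B := ρ * q with hB
  have hBA : B < A := by linarith
  have hAB : -A < B := by
    have h2q : (0 : ℝ) < 2 * q - 1 := by
      have : (1 : ℝ) ≤ q := by exact_mod_cast hq
      linarith
    have := (div_lt_iff₀ h2q).1 hρ2
    linarith
  have hSNR' : ∀ ν, SNR ν = b1 ^ 2 * q * ((1 + ν * γ) ^ 2 / (A * (1 + ν ^ 2) + 2 * B * ν)) := by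
    intro ν
    rw [hSNR, mul_div_assoc, hA, hB]
    congr 2
    ring
  have hc : 0 ≤ b1 ^ 2 * q := by positivity
  rw [mul_assoc γ ρ] at hden ⊢
  refine ⟨fun ν => ?_, ?_, fun ν => ?_⟩
  · rw [hSNR', hSNR', sq_div_symQuad_eq_at_argmax hBA hAB hden]
    exact mul_le_mul_of_nonneg_left (sq_div_symQuad_le hBA hAB γ ν) hc
  · rw [hSNR, div_mul_cancel₀ _ hγ0.ne']
    norm_num
  · rw [hSNR']
    exact mul_nonneg hc (div_nonneg (sq_nonneg _) (symQuad_pos hBA hAB ν).le)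

/-- SNR(ν) = b₁²q(1+νγ)²/[(1−ρ)(1+ν²)+ρq(1+ν)²] is maximized
at ν = (γ(1−ρ+ρq) − ρq)/(1−ρ+ρq − γρq) and attains its minimum value 0
at ν = −1/γ. -/
theorem two_group_snr_optimum (q : ℕ) (hq : 1 ≤ q)
    (b1 γ ρ : ℝ) (hb1 : 0 < b1) (hγ0 : 0 < γ) (hγ1 : γ < 1)
    (hρ1 : ρ < 1) (hρ2 : -1 / (2 * (q : ℝ) - 1) < ρ)
    (hden : 1 - ρ + ρ * q - γ * ρ * q ≠ 0)
    (SNR : ℝ → ℝ)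
    (hSNR : ∀ ν, SNR ν = b1 ^ 2 * q * (1 + ν * γ) ^ 2 /
      ((1 - ρ) * (1 + ν ^ 2) + ρ * q * (1 + ν) ^ 2)) :
    (∀ ν, SNR ν ≤ SNR ((γ * (1 - ρ + ρ * q) - ρ * q) / (1 - ρ + ρ * q - γ * ρ * q))) ∧
    SNR (-1 / γ) = 0 ∧ (∀ ν, 0 ≤ SNR ν) :=
  two_group_snr_optimum_general q hq b1 γ ρ hγ0 hρ1 hρ2 hden SNR hSNR
end

section
/- As q → ∞, the maximal SNR in the two-group model satisfies SNR(w_MAF) ~ q·b₁²(1−γ)²/(2(1−ρ)); in particular max_ν SNR(ν) grows linearly in q and the optimal ratio ν_MAF tends to −1. -/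
/-! Writing `D(q) = 1 - ρ + (1 - γ)ρq`, the optimal ratio is `ν_MAF = -1 + (1 - ρ)(1 + γ)/D(q)`.
Hence `ν_MAF → -1` while `q(1 + ν_MAF)` stays bounded, so the term `ρq(1 + ν)²` in the
denominator of `SNR` vanishes and `SNR(ν_MAF)/q → b₁²(1 - γ)²/(2(1 - ρ))`. -/

open Filter Topology

lemma tendsto_affine_div_affine_atTop (a b c d : ℝ) (hd : d ≠ 0) :
    Tendsto (fun x : ℝ => (a + b * x) / (c + d * x)) atTop (𝓝 (b / d)) := by
  have hlim (u v : ℝ) : Tendsto (fun x : ℝ => u * x⁻¹ + v) atTop (𝓝 v) := by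
    simpa using (tendsto_inv_atTop_zero.const_mul u).add_const v
  refine ((hlim a b).div (hlim c d) hd).congr' ?_
  filter_upwards [eventually_gt_atTop 0] with x hx
  rw [Pi.div_apply, ← mul_div_mul_right _ _ hx.ne']
  congr 1 <;> field_simp

lemma tendsto_snr_of_tendsto_mul_sq {ι : Type*} {l : Filter ι} (b1 γ : ℝ) {ρ : ℝ} (hρ : ρ ≠ 1)
    {x ν : ι → ℝ} (hν : Tendsto ν l (𝓝 (-1)))
    (hx : Tendsto (fun i => x i * (1 + ν i) ^ 2) l (𝓝 0)) :
    Tendsto (fun i => b1 ^ 2 * (1 + ν i * γ) ^ 2 /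
        ((1 - ρ) * (1 + ν i ^ 2) + ρ * x i * (1 + ν i) ^ 2))
      l (𝓝 (b1 ^ 2 * (1 - γ) ^ 2 / (2 * (1 - ρ)))) := by
  have hnum : Tendsto (fun i => b1 ^ 2 * (1 + ν i * γ) ^ 2) l (𝓝 (b1 ^ 2 * (1 - γ) ^ 2)) := by
    convert (((hν.mul_const γ).const_add 1).pow 2).const_mul (b1 ^ 2) using 3
    ring
  have hden : Tendsto (fun i => (1 - ρ) * (1 + ν i ^ 2) + ρ * x i * (1 + ν i) ^ 2) l
      (𝓝 (2 * (1 - ρ))) := by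
    convert ((hν.pow 2).const_add 1 |>.const_mul (1 - ρ)).add (hx.const_mul ρ) using 2 <;> ring
  exact hnum.div hden (mul_ne_zero two_ne_zero (sub_ne_zero.2 hρ.symm))

noncomputable def mafRatio (γ ρ x : ℝ) : ℝ :=
  (γ * (1 - ρ + ρ * x) - ρ * x) / (1 - ρ + ρ * x - γ * ρ * x)

section mafRatio

variable {γ ρ : ℝ}

lemma tendsto_mafRatio_atTop (hγ : γ ≠ 1) (hρ : ρ ≠ 0) :
    Tendsto (mafRatio γ ρ) atTop (𝓝 (-1)) := by
  have hslope : (1 - γ) * ρ ≠ 0 := mul_ne_zero (sub_ne_zero.2 hγ.symm) hρ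
  have h := tendsto_affine_div_affine_atTop (γ * (1 - ρ)) ((γ - 1) * ρ) (1 - ρ) ((1 - γ) * ρ) hslope
  rw [← neg_sub 1 γ, neg_mul, neg_div, div_self hslope] at h
  refine h.congr fun x => ?_
  rw [mafRatio]
  congr 1 <;> ring

lemma tendsto_mul_one_add_mafRatio_atTop (hγ : γ < 1) (hρ : 0 < ρ) :
    Tendsto (fun x => x * (1 + mafRatio γ ρ x)) atTop
      (𝓝 ((1 - ρ) * (1 + γ) / ((1 - γ) * ρ))) := by
  have hslope : 0 < (1 - γ) * ρ := mul_pos (sub_pos.2 hγ) hρ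
  have hD : ∀ᶠ x in atTop, 1 - ρ + ρ * x - γ * ρ * x ≠ 0 := by
    have h := tendsto_atTop_add_const_left atTop (1 - ρ) (tendsto_id.const_mul_atTop hslope)
    filter_upwards [h.eventually_gt_atTop 0] with x hx
    exact (hx.trans_eq (by simp only [id]; ring)).ne'
  refine (tendsto_affine_div_affine_atTop 0 ((1 - ρ) * (1 + γ)) (1 - ρ) ((1 - γ) * ρ)
    hslope.ne').congr' ?_
  filter_upwards [hD] with x hx
  rw [mafRatio, one_add_div hx, mul_div_assoc']
  congr 1 <;> ring

lemma tendsto_mul_one_add_mafRatio_sq_atTop (hγ : γ < 1) (hρ : 0 < ρ) :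
    Tendsto (fun x => x * (1 + mafRatio γ ρ x) ^ 2) atTop (𝓝 0) := by
  simpa [sq, mul_assoc] using (tendsto_mul_one_add_mafRatio_atTop hγ hρ).mul
    ((tendsto_mafRatio_atTop hγ.ne hρ.ne').const_add 1)

end mafRatio

theorem two_group_snr_asymptotics_general
    (b1 γ ρ : ℝ) (hb1 : 0 < b1) (hγ1 : γ < 1)
    (hρ0 : 0 < ρ) (hρ1 : ρ < 1)
    (SNR : ℕ → ℝ → ℝ)
    (hSNR : ∀ (q : ℕ) (ν : ℝ), SNR q ν = b1 ^ 2 * q * (1 + ν * γ) ^ 2 /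
      ((1 - ρ) * (1 + ν ^ 2) + ρ * q * (1 + ν) ^ 2))
    (νMAF : ℕ → ℝ)
    (hν : ∀ q : ℕ, νMAF q =
      (γ * (1 - ρ + ρ * q) - ρ * q) / (1 - ρ + ρ * q - γ * ρ * q)) :
    Tendsto (fun q : ℕ =>
        SNR q (νMAF q) / ((q : ℝ) * b1 ^ 2 * (1 - γ) ^ 2 / (2 * (1 - ρ))))
      atTop (nhds 1) ∧
    Tendsto νMAF atTop (nhds (-1)) := by
  obtain rfl : νMAF = fun q : ℕ => mafRatio γ ρ q := funext hν
  have hcast := tendsto_natCast_atTop_atTop (R := ℝ)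
  have hν_lim := (tendsto_mafRatio_atTop hγ1.ne hρ0.ne').comp hcast
  refine ⟨?_, hν_lim⟩
  have hC : b1 ^ 2 * (1 - γ) ^ 2 / (2 * (1 - ρ)) ≠ 0 := by
    have : 0 < 1 - γ := by linarith
    have : 0 < 1 - ρ := by linarith
    positivity
  have h := (tendsto_snr_of_tendsto_mul_sq b1 γ hρ1.ne hν_lim
    ((tendsto_mul_one_add_mafRatio_sq_atTop hγ1 hρ0).comp hcast)).div_const
    (b1 ^ 2 * (1 - γ) ^ 2 / (2 * (1 - ρ)))
  rw [div_self hC] at h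
  refine h.congr' ?_
  filter_upwards [eventually_gt_atTop 0] with q hq
  have hq' : (q : ℝ) ≠ 0 := by positivity
  rw [hSNR, Function.comp_apply]
  field_simp

/-- as q → ∞, SNR(ν_MAF(q)) ~ q·b₁²(1−γ)²/(2(1−ρ)) (so the
maximal SNR grows linearly in q) and ν_MAF(q) → −1. -/
theorem two_group_snr_asymptotics
    (b1 γ ρ : ℝ) (hb1 : 0 < b1) (hγ0 : 0 < γ) (hγ1 : γ < 1)
    (hρ0 : 0 < ρ) (hρ1 : ρ < 1)
    (SNR : ℕ → ℝ → ℝ)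
    (hSNR : ∀ (q : ℕ) (ν : ℝ), SNR q ν = b1 ^ 2 * q * (1 + ν * γ) ^ 2 /
      ((1 - ρ) * (1 + ν ^ 2) + ρ * q * (1 + ν) ^ 2))
    (νMAF : ℕ → ℝ)
    (hν : ∀ q : ℕ, νMAF q =
      (γ * (1 - ρ + ρ * q) - ρ * q) / (1 - ρ + ρ * q - γ * ρ * q)) :
    Tendsto (fun q : ℕ =>
        SNR q (νMAF q) / ((q : ℝ) * b1 ^ 2 * (1 - γ) ^ 2 / (2 * (1 - ρ))))
      atTop (nhds 1) ∧
    Tendsto νMAF atTop (nhds (-1)) :=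
  two_group_snr_asymptotics_general b1 γ ρ hb1 hγ1 hρ0 hρ1 SNR hSNR νMAF hν
end

section
/- Under the constraint w₁² + w₂² = 1, the quantity (q w₁ b₁ + q w₂ b₂)² + (1−ρ) + ρ(q w₁ + q w₂)² is maximized when w₂/w₁ = √(α²+1) − α with α = (b₁² − b₂²)/(2(b₁b₂ + ρ)). -/
/-!
Up to the factor `q²` and the constant `1 - ρ`, the objective is the quadratic form of the symmetric
matrix `[[b₁² + ρ, b₁b₂ + ρ], [b₁b₂ + ρ, b₂² + ρ]]`, so its maximizers on the unit circle are the unit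
eigenvectors of the top eigenvalue. Explicitly, for a form `a x² + 2c xy + d y²` with `c > 0` and
`a - d = 2cα`, the number `t = √(α² + 1) - α > 0` solves `t² + 2αt = 1`, and on the unit circle
`t (a + ct - Q(x, y)) = c (tx - y)²`. Hence `Q ≤ a + ct`, with equality exactly on the line `y = tx`.
-/

namespace Real

lemma sqrt_sq_add_one_sub_self_pos (α : ℝ) : 0 < √(α ^ 2 + 1) - α :=
  sub_pos.mpr (lt_sqrt_of_sq_lt (lt_add_one _))

lemma sqrt_sq_add_one_sub_self_sq_add (α : ℝ) :
    (√(α ^ 2 + 1) - α) ^ 2 + 2 * α * (√(α ^ 2 + 1) - α) = 1 := by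
  linear_combination sq_sqrt (by positivity : (0 : ℝ) ≤ α ^ 2 + 1)

end Real

section BinaryQuadraticForm

variable {a c d α t : ℝ}

lemma binary_quadratic_gap_on_unit_circle (hα : a - d = 2 * c * α) (ht : t ^ 2 + 2 * α * t = 1)
    {x y : ℝ} (hxy : x ^ 2 + y ^ 2 = 1) :
    t * (a + c * t - (a * x ^ 2 + 2 * c * x * y + d * y ^ 2)) = c * (t * x - y) ^ 2 := by
  linear_combination -t * (a + c * t) * hxy + t * y ^ 2 * hα + c * y ^ 2 * ht

theorem binary_quadratic_maximizer_ratio (hc : 0 < c) (hα : a - d = 2 * c * α)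
    {w1 w2 : ℝ} (hw : w1 ^ 2 + w2 ^ 2 = 1)
    (hmax : ∀ u1 u2 : ℝ, u1 ^ 2 + u2 ^ 2 = 1 →
      a * u1 ^ 2 + 2 * c * u1 * u2 + d * u2 ^ 2 ≤ a * w1 ^ 2 + 2 * c * w1 * w2 + d * w2 ^ 2) :
    w1 ≠ 0 ∧ w2 / w1 = √(α ^ 2 + 1) - α := by
  set t := √(α ^ 2 + 1) - α
  have ht_pos : 0 < t := Real.sqrt_sq_add_one_sub_self_pos α
  have ht : t ^ 2 + 2 * α * t = 1 := Real.sqrt_sq_add_one_sub_self_sq_add α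
  set N := √(1 + t ^ 2)
  have hN : 0 < N := Real.sqrt_pos.mpr (by positivity)
  have hv : (1 / N) ^ 2 + (t / N) ^ 2 = 1 := by
    rw [div_pow, div_pow, ← add_div, Real.sq_sqrt (by positivity), one_pow, div_self (by positivity)]
  have hv_value : a * (1 / N) ^ 2 + 2 * c * (1 / N) * (t / N) + d * (t / N) ^ 2 = a + c * t := by
    have h := binary_quadratic_gap_on_unit_circle hα ht hv
    rw [show t * (1 / N) - t / N = 0 by ring, zero_pow two_ne_zero, mul_zero] at h
    linarith [(mul_eq_zero.mp h).resolve_left ht_pos.ne']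
  have hgap := binary_quadratic_gap_on_unit_circle hα ht hw
  have hline : w2 = t * w1 := by
    have hle : c * (t * w1 - w2) ^ 2 ≤ 0 := by
      rw [← hgap]
      exact mul_nonpos_of_nonneg_of_nonpos ht_pos.le (by linarith [hmax _ _ hv])
    have hsq : (t * w1 - w2) ^ 2 = 0 :=
      le_antisymm (nonpos_of_mul_nonpos_right hle hc) (sq_nonneg _)
    linear_combination -(pow_eq_zero_iff two_ne_zero).mp hsq
  have hw1 : w1 ≠ 0 := by
    rintro rfl
    simp [hline] at hw
  exact ⟨hw1, (div_eq_iff hw1).mpr hline⟩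

end BinaryQuadraticForm

lemma pca_objective_eq (q w1 w2 b1 b2 ρ : ℝ) :
    (q * w1 * b1 + q * w2 * b2) ^ 2 + (1 - ρ) + ρ * (q * w1 + q * w2) ^ 2 =
      q ^ 2 * ((b1 ^ 2 + ρ) * w1 ^ 2 + 2 * (b1 * b2 + ρ) * w1 * w2 + (b2 ^ 2 + ρ) * w2 ^ 2)
        + (1 - ρ) := by
  ring

theorem two_group_pca_ratio_general (q : ℕ) (hq : 1 ≤ q)
    (b1 b2 ρ : ℝ) (hbρ : b1 * b2 + ρ > 0)
    (g : ℝ → ℝ → ℝ)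
    (hg : ∀ w1 w2, g w1 w2 =
      ((q : ℝ) * w1 * b1 + (q : ℝ) * w2 * b2) ^ 2 + (1 - ρ) +
        ρ * ((q : ℝ) * w1 + (q : ℝ) * w2) ^ 2) :
    ∀ w1 w2 : ℝ, w1 ^ 2 + w2 ^ 2 = 1 →
      (∀ u1 u2 : ℝ, u1 ^ 2 + u2 ^ 2 = 1 → g u1 u2 ≤ g w1 w2) →
      w1 ≠ 0 ∧
        w2 / w1 =
          Real.sqrt (((b1 ^ 2 - b2 ^ 2) / (2 * (b1 * b2 + ρ))) ^ 2 + 1) -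
            (b1 ^ 2 - b2 ^ 2) / (2 * (b1 * b2 + ρ)) := by
  intro w1 w2 hw hmax
  have hq2 : (0 : ℝ) < (q : ℝ) ^ 2 := by
    have : (0 : ℝ) < q := by exact_mod_cast hq
    positivity
  refine binary_quadratic_maximizer_ratio (a := b1 ^ 2 + ρ) (d := b2 ^ 2 + ρ) hbρ ?_ hw fun u1 u2 hu => ?_
  · field_simp
    ring
  · have h := hmax u1 u2 hu
    rw [hg, hg, pca_objective_eq, pca_objective_eq] at h
    exact le_of_mul_le_mul_left (le_of_add_le_add_right h) hq2

/-- under w₁² + w₂² = 1, the PCA objective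
(qw₁b₁ + qw₂b₂)² + (1−ρ) + ρ(qw₁ + qw₂)² is maximized when
w₂/w₁ = √(α²+1) − α with α = (b₁² − b₂²)/(2(b₁b₂ + ρ)). -/
theorem two_group_pca_ratio (q : ℕ) (hq : 1 ≤ q)
    (b1 b2 ρ : ℝ) (hb : b1 > b2) (hb2 : b2 > 0)
    (hρ1 : ρ < 1) (hρ2 : -1 / (2 * (q : ℝ) - 1) < ρ) (hbρ : b1 * b2 + ρ > 0)
    (g : ℝ → ℝ → ℝ)
    (hg : ∀ w1 w2, g w1 w2 =
      ((q : ℝ) * w1 * b1 + (q : ℝ) * w2 * b2) ^ 2 + (1 - ρ) +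
        ρ * ((q : ℝ) * w1 + (q : ℝ) * w2) ^ 2) :
    ∀ w1 w2 : ℝ, w1 ^ 2 + w2 ^ 2 = 1 →
      (∀ u1 u2 : ℝ, u1 ^ 2 + u2 ^ 2 = 1 → g u1 u2 ≤ g w1 w2) →
      w1 ≠ 0 ∧
        w2 / w1 =
          Real.sqrt (((b1 ^ 2 - b2 ^ 2) / (2 * (b1 * b2 + ρ))) ^ 2 + 1) -
            (b1 ^ 2 - b2 ^ 2) / (2 * (b1 * b2 + ρ)) :=
  two_group_pca_ratio_general q hq b1 b2 ρ hbρ g hg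
end

section
/- Let Σ_Z = bb' + ρ1_p1_p' + (1−ρ)I with b̄ = (1/p)Σb_i ≠ 0 and ρ ≠ 0. Then the vectors v₁ = ((ρp − |b|² + Δ)/(2b̄p))1_p + b and v₂ = ((ρp − |b|² − Δ)/(2b̄p))1_p + b, where Δ² = (|b|² − ρp)² + 4(b̄p)²ρ, are eigenvectors of Σ_Z with eigenvalues (ρp + |b|² ± Δ)/2 + 1 − ρ respectively. -/
/-!
Writing `v = c • 1 + b` and `s = ∑ bᵢ`, the matrix `Σ_Z` maps `v` into `span {1, b}`:
`Σ_Z v = (c s + |b|²) b + ρ (c p + s) 1 + (1 - ρ) v`. Matching the coefficients of `b` and `1`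
shows that `v` is an eigenvector with eigenvalue `c s + |b|² + 1 - ρ` as soon as
`s c² + (|b|² - ρ p) c - ρ s = 0`, a quadratic whose discriminant is `Δ²` and whose roots are the
two coefficients in the statement.
-/

open Matrix

namespace Matrix

variable {n R : Type*} [Fintype n] [DecidableEq n] [CommRing R]

def spikedEquicorrelation (b : n → R) (ρ : R) : Matrix n n R :=
  vecMulVec b b + ρ • vecMulVec 1 1 + (1 - ρ) • 1

theorem spikedEquicorrelation_mulVec (b v : n → R) (ρ : R) :
    spikedEquicorrelation b ρ *ᵥ v = (b ⬝ᵥ v) • b + (ρ * (1 ⬝ᵥ v)) • 1 + (1 - ρ) • v := by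
  simp only [spikedEquicorrelation, add_mulVec, smul_mulVec, vecMulVec_mulVec, op_smul_eq_smul,
    one_mulVec, smul_smul]

theorem spikedEquicorrelation_mulVec_smul_one_add_self (b : n → R) (ρ c : R)
    (hc : (∑ i, b i) * (c * c) + (b ⬝ᵥ b - ρ * Fintype.card n) * c + -(ρ * ∑ i, b i) = 0) :
    spikedEquicorrelation b ρ *ᵥ (c • 1 + b) =
      (c * ∑ i, b i + b ⬝ᵥ b + 1 - ρ) • (c • 1 + b) := by
  have hb : b ⬝ᵥ (c • 1 + b) = c * ∑ i, b i + b ⬝ᵥ b := by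
    rw [dotProduct_add, dotProduct_smul, dotProduct_one, smul_eq_mul]
  have h1 : 1 ⬝ᵥ (c • 1 + b) = c * Fintype.card n + ∑ i, b i := by
    rw [dotProduct_add, dotProduct_smul, one_dotProduct_one, one_dotProduct, smul_eq_mul]
  rw [spikedEquicorrelation_mulVec, hb, h1]
  ext i
  simp only [Pi.add_apply, Pi.smul_apply, Pi.one_apply, smul_eq_mul]
  linear_combination -hc

end Matrix

theorem spiked_equicorrelation_general_eigenvectors_general {p : ℕ}
    (b : Fin p → ℝ) (ρ : ℝ)
    (bbar : ℝ) (hbar : bbar = (1 / (p : ℝ)) * ∑ i, b i) (hbar0 : bbar ≠ 0)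
    (Δ : ℝ)
    (hΔ : Δ ^ 2 = (b ⬝ᵥ b - ρ * p) ^ 2 + 4 * (bbar * p) ^ 2 * ρ)
    (SZ : Matrix (Fin p) (Fin p) ℝ)
    (hSig : SZ = Matrix.vecMulVec b b +
        ρ • Matrix.vecMulVec (fun _ : Fin p => (1 : ℝ)) (fun _ => 1) +
        (1 - ρ) • (1 : Matrix (Fin p) (Fin p) ℝ)) :
    SZ *ᵥ (((ρ * p - b ⬝ᵥ b + Δ) / (2 * bbar * p)) • (fun _ => (1 : ℝ)) + b) =
      ((ρ * p + b ⬝ᵥ b + Δ) / 2 + 1 - ρ) •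
        (((ρ * p - b ⬝ᵥ b + Δ) / (2 * bbar * p)) • (fun _ => (1 : ℝ)) + b) ∧
    SZ *ᵥ (((ρ * p - b ⬝ᵥ b - Δ) / (2 * bbar * p)) • (fun _ => (1 : ℝ)) + b) =
      ((ρ * p + b ⬝ᵥ b - Δ) / 2 + 1 - ρ) •
        (((ρ * p - b ⬝ᵥ b - Δ) / (2 * bbar * p)) • (fun _ => (1 : ℝ)) + b) := by
  replace hSig : SZ = spikedEquicorrelation b ρ := hSig
  subst hSig
  have hp : (p : ℝ) ≠ 0 := fun h => hbar0 (by simp [hbar, h])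
  have hsum : ∑ i, b i = bbar * p := by rw [hbar]; field_simp
  have hsum0 : ∑ i, b i ≠ 0 := hsum ▸ mul_ne_zero hbar0 hp
  have hdiscrim : discrim (∑ i, b i) (b ⬝ᵥ b - ρ * p) (-(ρ * ∑ i, b i)) = Δ * Δ := by
    rw [discrim, hsum, ← sq, hΔ]; ring
  have hroots := quadratic_eq_zero_iff hsum0 hdiscrim
  have heigen (c : ℝ) (hc : c = (-(b ⬝ᵥ b - ρ * p) + Δ) / (2 * ∑ i, b i) ∨
      c = (-(b ⬝ᵥ b - ρ * p) - Δ) / (2 * ∑ i, b i)) :=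
    spikedEquicorrelation_mulVec_smul_one_add_self b ρ c
      (by simpa only [Fintype.card_fin] using (hroots c).2 hc)
  rw [← Pi.one_def]
  constructor
  · convert heigen ((ρ * p - b ⬝ᵥ b + Δ) / (2 * bbar * p)) (.inl (by rw [hsum]; ring)) using 2
    rw [hsum]; field_simp; ring
  · convert heigen ((ρ * p - b ⬝ᵥ b - Δ) / (2 * bbar * p)) (.inr (by rw [hsum]; ring)) using 2
    rw [hsum]; field_simp; ring

/-- for Σ_Z = bb' + ρ11' + (1−ρ)I with b̄ ≠ 0, ρ ≠ 0,
the vectors v_± = ((ρp − |b|² ± Δ)/(2b̄p))1 + b, where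
Δ² = (|b|² − ρp)² + 4(b̄p)²ρ, are eigenvectors with eigenvalues
(ρp + |b|² ± Δ)/2 + 1 − ρ. -/
theorem spiked_equicorrelation_general_eigenvectors {p : ℕ}
    (b : Fin p → ℝ) (ρ : ℝ) (hρ0 : ρ ≠ 0)
    (hρ1 : ρ < 1) (hρ2 : -1 / ((p : ℝ) - 1) < ρ)
    (bbar : ℝ) (hbar : bbar = (1 / (p : ℝ)) * ∑ i, b i) (hbar0 : bbar ≠ 0)
    (Δ : ℝ) (hΔ0 : 0 ≤ Δ)
    (hΔ : Δ ^ 2 = (b ⬝ᵥ b - ρ * p) ^ 2 + 4 * (bbar * p) ^ 2 * ρ)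
    (SZ : Matrix (Fin p) (Fin p) ℝ)
    (hSig : SZ = Matrix.vecMulVec b b +
        ρ • Matrix.vecMulVec (fun _ : Fin p => (1 : ℝ)) (fun _ => 1) +
        (1 - ρ) • (1 : Matrix (Fin p) (Fin p) ℝ)) :
    SZ *ᵥ (((ρ * p - b ⬝ᵥ b + Δ) / (2 * bbar * p)) • (fun _ => (1 : ℝ)) + b) =
      ((ρ * p + b ⬝ᵥ b + Δ) / 2 + 1 - ρ) •
        (((ρ * p - b ⬝ᵥ b + Δ) / (2 * bbar * p)) • (fun _ => (1 : ℝ)) + b) ∧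
    SZ *ᵥ (((ρ * p - b ⬝ᵥ b - Δ) / (2 * bbar * p)) • (fun _ => (1 : ℝ)) + b) =
      ((ρ * p + b ⬝ᵥ b - Δ) / 2 + 1 - ρ) •
        (((ρ * p - b ⬝ᵥ b - Δ) / (2 * bbar * p)) • (fun _ => (1 : ℝ)) + b) :=
  spiked_equicorrelation_general_eigenvectors_general b ρ bbar hbar hbar0 Δ hΔ SZ hSig
end
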